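/- The elements α₁, γ₁, γ₂ are algebraically independent over ℂ; equivalently, the monomials {α₁^a γ₁^{b₁} γ₂^{b₂} : a, b₁, b₂ ∈ ℤ_{≥0}} form a ℂ-basis of the subalgebra ℂ[α₁, γ₁, γ₂] of 𝒫. -/
import Mathlib


open MvPolynomial

noncomputable section

/-- The polynomial ring `𝒫 = ℂ[x_{ij} : 1 ≤ i ≤ n, 1 ≤ j ≤ 3]` in the entries of an
`n × 3` matrix of indeterminates. -/
abbrev P (n : ℕ) : Type := MvPolynomial (Fin n × Fin 3) ℂ

/-- The action of a matrix `g` on `𝒫`, given by `(g · f)(X) = f(gᵀ X)`;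
on variables it sends `x_{ij} ↦ ∑ s g_{si} x_{sj}`. -/
def matAct (n : ℕ) (g : Matrix (Fin n) (Fin n) ℂ) : P n →ₐ[ℂ] P n :=
  aeval fun p : Fin n × Fin 3 => ∑ s : Fin n, C (g s p.1) * X (s, p.2)

/-- The action of `σ ∈ S₃` permuting columns: `x_{ij} ↦ x_{iσ(j)}`. -/
def permAct (n : ℕ) (σ : Equiv.Perm (Fin 3)) : P n →ₐ[ℂ] P n :=
  aeval fun p : Fin n × Fin 3 => X (p.1, σ p.2)

/-- `g` is upper triangular with all diagonal entries equal to `1`, i.e. `g ∈ U_n`. -/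
def IsUpperUni (n : ℕ) (g : Matrix (Fin n) (Fin n) ℂ) : Prop :=
  (∀ i, g i i = 1) ∧ ∀ i j, j < i → g i j = 0

/-- `f` is `U_n`-invariant. -/
def UInv (n : ℕ) (f : P n) : Prop :=
  ∀ g : Matrix (Fin n) (Fin n) ℂ, IsUpperUni n g → matAct n g f = f

/-- `f ∈ Q_m` : each monomial of `f` has total degree `m` in the column-`j` variables,
for each `j`. -/
def InQm (n m : ℕ) (f : P n) : Prop :=
  ∀ d ∈ f.support, ∀ j : Fin 3, (∑ i : Fin n, d (i, j)) = m

/-- `f ∈ Q = ⊕ₘ Q_m` : each monomial of `f` has equal total degree in the three columns. -/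
def InQ (n : ℕ) (f : P n) : Prop :=
  ∀ d ∈ f.support, ∀ j : Fin 3, (∑ i : Fin n, d (i, j)) = ∑ i : Fin n, d (i, (0 : Fin 3))

/-- The variable `x_{(i+1)(j+1)}`, `i j : Fin 3` (0-indexed rows and columns). -/
def Xe (n : ℕ) (hn : 3 ≤ n) (i j : Fin 3) : P n := X (Fin.castLE hn i, j)

/-- `δ_{ij} = x_{1i} x_{2j} - x_{2i} x_{1j}` (0-indexed columns `i j : Fin 3`). -/
def del (n : ℕ) (hn : 3 ≤ n) (i j : Fin 3) : P n :=
  Xe n hn 0 i * Xe n hn 1 j - Xe n hn 1 i * Xe n hn 0 j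

/-- `α₁ = x₁₁ x₁₂ x₁₃`. -/
def alpha1 (n : ℕ) (hn : 3 ≤ n) : P n := Xe n hn 0 0 * Xe n hn 0 1 * Xe n hn 0 2

/-- `β₂ = x₁₂ δ₁₃`. -/
def beta2 (n : ℕ) (hn : 3 ≤ n) : P n := Xe n hn 0 1 * del n hn 0 2

/-- `β₃ = x₁₃ δ₁₂`. -/
def beta3 (n : ℕ) (hn : 3 ≤ n) : P n := Xe n hn 0 2 * del n hn 0 1

/-- `γ₁ = det (x_{ij})_{1 ≤ i,j ≤ 3}`. -/
def gamma1 (n : ℕ) (hn : 3 ≤ n) : P n := Matrix.det (Matrix.of fun i j : Fin 3 => Xe n hn i j)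

/-- `γ₂ = δ₁₂ δ₁₃ δ₂₃`. -/
def gamma2 (n : ℕ) (hn : 3 ≤ n) : P n := del n hn 0 1 * del n hn 0 2 * del n hn 1 2

/-- `α₂ = β₂² + β₃² − β₂ β₃`. -/
def alpha2 (n : ℕ) (hn : 3 ≤ n) : P n := beta2 n hn ^ 2 + beta3 n hn ^ 2 - beta2 n hn * beta3 n hn

/-- `α₃ = 2(β₂³ + β₃³) − 3(β₂² β₃ + β₂ β₃²)`. -/
def alpha3 (n : ℕ) (hn : 3 ≤ n) : P n :=
  2 * (beta2 n hn ^ 3 + beta3 n hn ^ 3) -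
    3 * (beta2 n hn ^ 2 * beta3 n hn + beta2 n hn * beta3 n hn ^ 2)

/-! ### Auxiliary material for `stmt_14` -/

/-- Substitution sending the first three rows of the matrix of variables to
`(a,1,1), (0,b,2b), (0,0,c)` and all other rows to `0`. -/
def subst3 (n : ℕ) : Fin n × Fin 3 → MvPolynomial (Fin 3) ℂ := fun p =>
  if (p.1 : ℕ) = 0 then ![X 0, 1, 1] p.2
  else if (p.1 : ℕ) = 1 then ![0, X 1, 2 * X 1] p.2
  else if (p.1 : ℕ) = 2 then ![0, 0, X 2] p.2
  else 0

/-- The evaluation homomorphism corresponding to `subst3`. -/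
def eS (n : ℕ) : P n →ₐ[ℂ] MvPolynomial (Fin 3) ℂ := aeval (subst3 n)

lemma heXe (n : ℕ) (hn : 3 ≤ n) (i j : Fin 3) :
    eS n (Xe n hn i j) = ![![X 0, 1, 1], ![0, X 1, 2 * X 1], ![0, 0, X 2]] i j := by
  fin_cases i <;> simp [eS, Xe, subst3]

lemma heA (n : ℕ) (hn : 3 ≤ n) : eS n (alpha1 n hn) = X 0 := by
  simp [alpha1, map_mul, heXe]

lemma heG1 (n : ℕ) (hn : 3 ≤ n) : eS n (gamma1 n hn) = X 0 * X 1 * X 2 := by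
  simp only [gamma1, Matrix.det_fin_three, Matrix.of_apply, map_sub, map_add, map_mul, heXe]
  simp [Matrix.vecHead, Matrix.vecTail]

lemma heG2 (n : ℕ) (hn : 3 ≤ n) : eS n (gamma2 n hn) = 2 * X 0 ^ 2 * X 1 ^ 3 := by
  simp only [gamma2, del, map_sub, map_mul, heXe]
  simp [Matrix.vecHead, Matrix.vecTail]
  ring

/-- Exponent map `(a,b,c) ↦ (a+b+2c, b+3c, b)`. -/
def g3 : ℕ × ℕ × ℕ → (Fin 3 →₀ ℕ) := fun p =>
  Finsupp.single 0 (p.1 + p.2.1 + 2 * p.2.2) + Finsupp.single 1 (p.2.1 + 3 * p.2.2) +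
    Finsupp.single 2 p.2.1

lemma g3_apply (p : ℕ × ℕ × ℕ) :
    g3 p 0 = p.1 + p.2.1 + 2 * p.2.2 ∧ g3 p 1 = p.2.1 + 3 * p.2.2 ∧ g3 p 2 = p.2.1 := by
  refine ⟨?_, ?_, ?_⟩ <;> simp [g3, Finsupp.single_apply]

lemma g3_inj : Function.Injective g3 := by
  intro p q h
  have h0 := DFunLike.congr_fun h 0
  have h1 := DFunLike.congr_fun h 1
  have h2 := DFunLike.congr_fun h 2
  rw [(g3_apply p).1, (g3_apply q).1] at h0
  rw [(g3_apply p).2.1, (g3_apply q).2.1] at h1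
  rw [(g3_apply p).2.2, (g3_apply q).2.2] at h2
  obtain ⟨a, b, c⟩ := p; obtain ⟨a', b', c'⟩ := q
  simp only [Prod.mk.injEq] at *
  omega

/-- Unit weights `2^c`. -/
def w3 : ℕ × ℕ × ℕ → ℂˣ := fun p => (Units.mk0 (2 : ℂ) two_ne_zero) ^ p.2.2

lemma lin2 : LinearIndependent ℂ
    (w3 • fun p : ℕ × ℕ × ℕ => (monomial (g3 p) (1 : ℂ) : MvPolynomial (Fin 3) ℂ)) := by
  apply LinearIndependent.units_smul
  have := (basisMonomials (Fin 3) ℂ).linearIndependent.comp g3 g3_inj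
  simpa [coe_basisMonomials, Function.comp_def] using this

lemma key3 (p : ℕ × ℕ × ℕ) :
    (X 0 : MvPolynomial (Fin 3) ℂ) ^ p.1 * (X 0 * X 1 * X 2) ^ p.2.1 *
      (2 * X 0 ^ 2 * X 1 ^ 3) ^ p.2.2
    = (w3 • fun p : ℕ × ℕ × ℕ => (monomial (g3 p) (1 : ℂ) : MvPolynomial (Fin 3) ℂ)) p := by
  obtain ⟨a, b, c⟩ := p
  show _ = w3 (a,b,c) • (monomial (g3 (a,b,c)) (1:ℂ))
  rw [Units.smul_def, smul_eq_C_mul, monomial_eq, Finsupp.prod_pow, Fin.prod_univ_three,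
    (g3_apply (a,b,c)).1, (g3_apply (a,b,c)).2.1, (g3_apply (a,b,c)).2.2]
  show _ = C (((Units.mk0 (2:ℂ) two_ne_zero) ^ c : ℂˣ) : ℂ) * _
  rw [Units.val_pow_eq_pow_val, Units.val_mk0, map_pow, map_ofNat, C_1]
  ring

/-- `α₁, γ₁, γ₂` are algebraically independent over `ℂ`; equivalently, the monomials
`α₁^a γ₁^{b₁} γ₂^{b₂}` form a ℂ-basis of `ℂ[α₁, γ₁, γ₂]`. -/
theorem stmt_14 (n : ℕ) (hn : 3 ≤ n) :
    AlgebraicIndependent ℂ ![alpha1 n hn, gamma1 n hn, gamma2 n hn] ∧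
    LinearIndependent ℂ
      (fun p : ℕ × ℕ × ℕ =>
        alpha1 n hn ^ p.1 * gamma1 n hn ^ p.2.1 * gamma2 n hn ^ p.2.2) ∧
    ((Submodule.span ℂ
        (Set.range fun p : ℕ × ℕ × ℕ =>
          alpha1 n hn ^ p.1 * gamma1 n hn ^ p.2.1 * gamma2 n hn ^ p.2.2) : Set (P n)) =
      (Algebra.adjoin ℂ {alpha1 n hn, gamma1 n hn, gamma2 n hn} : Set (P n))) := by
  have h2 : LinearIndependent ℂ
      (fun p : ℕ × ℕ × ℕ =>
        alpha1 n hn ^ p.1 * gamma1 n hn ^ p.2.1 * gamma2 n hn ^ p.2.2) := by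
    apply LinearIndependent.of_comp (eS n).toLinearMap
    have hkey : (⇑(eS n).toLinearMap ∘ fun p : ℕ × ℕ × ℕ =>
        alpha1 n hn ^ p.1 * gamma1 n hn ^ p.2.1 * gamma2 n hn ^ p.2.2)
        = (w3 • fun p : ℕ × ℕ × ℕ => (monomial (g3 p) (1 : ℂ) : MvPolynomial (Fin 3) ℂ)) := by
      funext p
      show eS n (alpha1 n hn ^ p.1 * gamma1 n hn ^ p.2.1 * gamma2 n hn ^ p.2.2) = _
      rw [map_mul, map_mul, map_pow, map_pow, map_pow, heA n hn, heG1 n hn, heG2 n hn]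
      exact key3 p
    rw [hkey]
    exact lin2
  have hexp : ∀ q : MvPolynomial (Fin 3) ℂ,
      aeval ![alpha1 n hn, gamma1 n hn, gamma2 n hn] q
        = ∑ d ∈ q.support, coeff d q •
            (alpha1 n hn ^ d 0 * gamma1 n hn ^ d 1 * gamma2 n hn ^ d 2) := by
    intro q
    conv_lhs => rw [q.as_sum]
    rw [map_sum]
    refine Finset.sum_congr rfl fun d _ => ?_
    rw [aeval_monomial, ← Algebra.smul_def]
    congr 1
    rw [Finsupp.prod_pow, Fin.prod_univ_three]
    simp [Matrix.cons_val_zero, Matrix.cons_val_one, Matrix.head_cons]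
  have hinj3 : Function.Injective (fun d : Fin 3 →₀ ℕ => ((d 0, d 1, d 2) : ℕ × ℕ × ℕ)) := by
    intro d d' hdd'
    simp only [Prod.mk.injEq] at hdd'
    ext i
    fin_cases i
    · exact hdd'.1
    · exact hdd'.2.1
    · exact hdd'.2.2
  refine ⟨?_, h2, ?_⟩
  · rw [algebraicIndependent_iff]
    intro q hq
    rw [hexp q] at hq
    have hz := linearIndependent_iff'.mp (h2.comp _ hinj3) q.support (fun d => coeff d q) hq
    ext d
    simp only [coeff_zero]
    by_cases hd : d ∈ q.support
    · exact hz d hd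
    · exact notMem_support_iff.mp hd
  · apply subset_antisymm
    · have hle : Submodule.span ℂ
          (Set.range fun p : ℕ × ℕ × ℕ =>
            alpha1 n hn ^ p.1 * gamma1 n hn ^ p.2.1 * gamma2 n hn ^ p.2.2)
          ≤ Subalgebra.toSubmodule
              (Algebra.adjoin ℂ {alpha1 n hn, gamma1 n hn, gamma2 n hn}) := by
        rw [Submodule.span_le]
        rintro _ ⟨p, rfl⟩
        show _ ∈ Algebra.adjoin ℂ _
        exact mul_mem
          (mul_mem (pow_mem (Algebra.subset_adjoin (by simp)) _)
            (pow_mem (Algebra.subset_adjoin (by simp)) _))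
          (pow_mem (Algebra.subset_adjoin (by simp)) _)
      intro x hx
      exact hle hx
    · intro x hx
      have hrange : Set.range ![alpha1 n hn, gamma1 n hn, gamma2 n hn]
          = ({alpha1 n hn, gamma1 n hn, gamma2 n hn} : Set (P n)) := by
        ext t
        simp only [Set.mem_insert_iff, Set.mem_singleton_iff]
        constructor
        · rintro ⟨i, rfl⟩
          fin_cases i <;> simp
        · rintro (rfl | rfl | rfl)
          exacts [⟨0, rfl⟩, ⟨1, rfl⟩, ⟨2, rfl⟩]
      have hx' : x ∈ Algebra.adjoin ℂ
          (Set.range ![alpha1 n hn, gamma1 n hn, gamma2 n hn]) := by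
        rw [hrange]; exact hx
      rw [Algebra.adjoin_range_eq_range_aeval] at hx'
      obtain ⟨q, rfl⟩ := hx'
      show (aeval ![alpha1 n hn, gamma1 n hn, gamma2 n hn]) q ∈ _
      rw [hexp q]
      exact Submodule.sum_mem _ fun d _ => Submodule.smul_mem _ _
        (Submodule.subset_span ⟨(d 0, d 1, d 2), rfl⟩)
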